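/- arXiv:1012.4210 — 4 statements merged into one kernel-verified Lean document; each statement's English description precedes it below -/
import Mathlib

section
/- Let n ≥ 2 and let D = (d_1, d_2, …, d_n) be a nondecreasing sequence of nonnegative integers with sum S_n = d_1 + ⋯ + d_n, and let B_n = n(n−1)/2. Then there exist nonnegative integers g and f and an n×n matrix M of nonnegative integers with zero diagonal whose i-th row sum equals d_i for every i, such that g ≤ M(i,j) + M(j,i) ≤ f for all i ≠ j, where f satisfies max(⌈S_n/B_n⌉, ⌈d_n/(n−1)⌉) ≤ f ≤ 2⌈d_n/(n−1)⌉ and 0 ≤ g ≤ f. -/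
/-!
Give player `i` at most `c = ⌈d_n / (n - 1)⌉` points in each of its `n - 1` games; this suffices
to realize `d_i ≤ d_n ≤ (n - 1) c`. Every pair then totals at most `f = 2c`, and `g = 0`.
Moreover `S_n ≤ n d_n ≤ n (n - 1) c = B_n f`, so `⌈S_n / B_n⌉ ≤ f`.
-/

open Finset

theorem Fin.exists_sum_eq_forall_le_of_le_mul {m a c : ℕ} (h : a ≤ m * c) :
    ∃ v : Fin m → ℕ, ∑ k, v k = a ∧ ∀ k, v k ≤ c := by
  induction m generalizing a with
  | zero => exact ⟨0, by simp_all, fun k => k.elim0⟩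
  | succ m ih =>
    obtain ⟨v, hsum, hle⟩ := ih (a := a - min a c) (by rw [Nat.succ_mul] at h; omega)
    refine ⟨Fin.cons (min a c) v, ?_, Fin.cases (min_le_right a c) hle⟩
    rw [Fin.sum_cons, hsum]
    omega

theorem exists_realization_le_of_le_mul {n c : ℕ} (D : Fin n → ℕ)
    (hD : ∀ i, D i ≤ (n - 1) * c) :
    ∃ M : Fin n → Fin n → ℕ,
      (∀ i, M i i = 0) ∧ (∀ i, ∑ j, M i j = D i) ∧ ∀ i j, M i j ≤ c := by
  cases n with
  | zero => exact ⟨0, fun i => i.elim0, fun i => i.elim0, fun i => i.elim0⟩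
  | succ m =>
    rw [Nat.add_sub_cancel] at hD
    choose v hsum hle using fun i => Fin.exists_sum_eq_forall_le_of_le_mul (hD i)
    refine ⟨fun i => Fin.insertNth i 0 (v i), fun i => Fin.insertNth_apply_same _ _ _,
      fun i => by simp [Fin.sum_insertNth, hsum], fun i => ?_⟩
    rw [Fin.forall_iff_succAbove i]
    simpa using hle i

/-- For `n ≥ 2` and a nondecreasing `D` with sum `S = ∑ D i` and
`B = n(n-1)/2`, there exist nonnegative integers `g ≤ f` and a realization `M` of `D` with
`g ≤ M i j + M j i ≤ f` for all `i ≠ j`, where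
`max(⌈S/B⌉, ⌈d_n/(n-1)⌉) ≤ f ≤ 2⌈d_n/(n-1)⌉` and `0 ≤ g ≤ f`. -/
theorem exists_realization_with_fg_bounds (n : ℕ) (hn : 2 ≤ n) (D : Fin n → ℕ)
    (hD : Monotone D) :
    ∃ g f : ℕ, ∃ M : Fin n → Fin n → ℕ,
      (∀ i, M i i = 0) ∧
      (∀ i, ∑ j, M i j = D i) ∧
      (∀ i j, i ≠ j → g ≤ M i j + M j i ∧ M i j + M j i ≤ f) ∧
      max (((∑ i, D i) + n * (n - 1) / 2 - 1) / (n * (n - 1) / 2))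
          ((D ⟨n - 1, by omega⟩ + n - 2) / (n - 1)) ≤ f ∧
      f ≤ 2 * ((D ⟨n - 1, by omega⟩ + n - 2) / (n - 1)) ∧
      0 ≤ g ∧ g ≤ f := by
  set dmax := D ⟨n - 1, by omega⟩
  set c := (dmax + n - 2) / (n - 1)
  have hc : c = dmax ⌈/⌉ (n - 1) := by
    rw [Nat.ceilDiv_eq_add_pred_div, show dmax + (n - 1) - 1 = dmax + n - 2 by omega]
  have hD_le : ∀ i, D i ≤ (n - 1) * c := fun i =>
    (hD (Fin.le_iff_val_le_val.2 (Nat.le_sub_one_of_lt i.isLt))).trans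
      (hc ▸ le_smul_ceilDiv (by omega))
  obtain ⟨M, hdiag, hrow, hle⟩ := exists_realization_le_of_le_mul D hD_le
  have hB : 0 < n * (n - 1) / 2 := Nat.div_pos (Nat.mul_le_mul hn (by omega : 1 ≤ n - 1)) two_pos
  have hS : ∑ i, D i ≤ n * (n - 1) / 2 * (2 * c) :=
    calc ∑ i, D i ≤ n * ((n - 1) * c) := (sum_le_sum fun i _ => hD_le i).trans_eq (by simp)
      _ = n * (n - 1) / 2 * 2 * c := by
        rw [Nat.div_mul_cancel (Nat.even_mul_pred_self n).two_dvd, mul_assoc]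
      _ = n * (n - 1) / 2 * (2 * c) := mul_assoc _ _ _
  refine ⟨0, 2 * c, M, hdiag, hrow, fun i j _ => ⟨Nat.zero_le _, by linarith [hle i j, hle j i]⟩,
    max_le ?_ (by omega), le_rfl, le_rfl, Nat.zero_le _⟩
  rwa [← Nat.ceilDiv_eq_add_pred_div, ceilDiv_le_iff_le_mul hB]
end

section
/- Let n ≥ 2 and let a ≤ b be nonnegative integers. A nondecreasing sequence D = (d_1, d_2, …, d_n) of nonnegative integers is the score sequence of some (a,b,n)-tournament if and only if for every k with 1 ≤ k ≤ n it holds that a·B_k ≤ S_k ≤ b·B_n − L_k − (n−k)·d_k, where B_k = k(k−1)/2, S_k = d_1 + ⋯ + d_k, and the integers L_k are defined by L_0 = 0 and L_k = max(L_{k−1}, b·B_k − S_k) for 1 ≤ k ≤ n. -/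
/-- `D` is the score sequence of some `(a,b,n)`-tournament. -/
def IsScoreSeqAB (n : ℕ) (a b : ℕ) (D : Fin n → ℕ) : Prop :=
  ∃ M : Fin n → Fin n → ℕ,
    (∀ i, M i i = 0) ∧
    (∀ i j, i ≠ j → a ≤ M i j + M j i ∧ M i j + M j i ≤ b) ∧
    (∀ i, ∑ j, M i j = D i)

/-- Partial sum `S_k = d_1 + ⋯ + d_k` (as an integer). -/
def Spart (n : ℕ) (D : Fin n → ℕ) (k : ℕ) : ℤ :=
  ∑ i : Fin n, if (i : ℕ) < k then (D i : ℤ) else 0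

/-- `B_k = k(k-1)/2` (as an integer). -/
def Bbin (k : ℕ) : ℤ := (k * (k - 1) / 2 : ℕ)

/-- The loss function: `L_0 = 0`, `L_k = max (L_{k-1}, b·B_k − S_k)`, computed in `ℤ`. -/
def Lloss (n : ℕ) (D : Fin n → ℕ) (b : ℕ) : ℕ → ℤ
  | 0 => 0
  | k + 1 => max (Lloss n D b k) ((b : ℤ) * Bbin (k + 1) - Spart n D (k + 1))

/-!
Necessity is double counting: the players of a set `s` share at least `a·C(|s|,2)` points among
themselves and win at most `b·(C(|s|,2) + |s|·|sᶜ|)` points altogether. For sufficiency take an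
`(a,b)`-tournament `M` whose score vector is `ℓ¹`-closest to `D`. Suppose a player `s` is below
target, and let `R` be the players from which `s` can receive a point along a chain of positive
entries. Shifting one point along a simple such chain does not move `M` away from `D`, and it
moves `M` closer if the chain ends at a player above target, or if one more point can then be
given to its last player. Hence every player of `R` is at or below target, all pairs meeting `R`
are saturated at `b`, and `R` takes every point against `Rᶜ`; so `R` wins
`b·(C(|R|,2) + |R|·|Rᶜ|) < ∑_{i ∈ R} d_i` points. A player above target is excluded in the same
way, with `a` in place of `b`. For nondecreasing `D` the binding sets of each size are prefixes and suffixes; the suffix bounds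
say `L_n ≤ b·B_n − S_n`, which together with `S_k + (n−k)·d_k ≤ S_n` is the stated condition.
-/

open Finset Relation

theorem List.exists_nodup_isChain_cons_of_relationReflTransGen {α : Type*} {r : α → α → Prop}
    {a b : α} (h : ReflTransGen r a b) :
    ∃ l, (a :: l).IsChain r ∧ (a :: l).Nodup ∧ (a :: l).getLast (List.cons_ne_nil _ _) = b := by
  classical
  induction h using ReflTransGen.head_induction_on with
  | refl => exact ⟨[], .singleton _, List.nodup_singleton _, rfl⟩
  | @head a c hac _ ih =>
    obtain ⟨l, hchain, hnodup, hlast⟩ := ih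
    by_cases ha : a ∈ c :: l
    · obtain ⟨l₁, l₂, hsplit⟩ := List.append_of_mem ha
      have hsuf : a :: l₂ <:+ c :: l := hsplit ▸ List.suffix_append l₁ (a :: l₂)
      refine ⟨l₂, hchain.suffix hsuf, hnodup.sublist hsuf.sublist, ?_⟩
      rw [← hlast]
      simp only [hsplit, List.getLast_append_of_ne_nil _ (List.cons_ne_nil a l₂)]
    · exact ⟨c :: l, hchain.cons_cons hac, List.nodup_cons.2 ⟨ha, hnodup⟩,
        by rwa [List.getLast_cons_cons]⟩

lemma Nat.add_choose_two (k m : ℕ) : (k + m).choose 2 = k.choose 2 + k * m + m.choose 2 := by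
  induction m with
  | zero => simp
  | succ m ih =>
    rw [← add_assoc, Nat.choose_succ_succ', Nat.choose_succ_succ', ih, Nat.choose_one_right,
      Nat.choose_one_right]
    ring

lemma Nat.choose_two_eq_of_le {k n : ℕ} (hk : k ≤ n) :
    n.choose 2 = k.choose 2 + k * (n - k) + (n - k).choose 2 := by
  rw [← Nat.add_choose_two, Nat.add_sub_cancel' hk]

namespace PointMatrix

variable {ι : Type*} {a b c : ℕ} {M N : ι → ι → ℕ} {x y : ι}

def IsABTournament (a b : ℕ) (M : ι → ι → ℕ) : Prop :=
  (∀ i, M i i = 0) ∧ ∀ i j, i ≠ j → a ≤ M i j + M j i ∧ M i j + M j i ≤ b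

lemma exists_isABTournament (hab : a ≤ b) : ∃ M : ι → ι → ℕ, IsABTournament a b M := by
  classical
  refine ⟨fun i j => if WellOrderingRel i j then a else 0, fun i => by simp [irrefl],
    fun i j hij => ?_⟩
  rcases trichotomous_of WellOrderingRel i j with h | h | h
  · simp [h, asymm h, hab]
  · exact absurd h hij
  · simp [h, asymm h, hab]

section

variable [DecidableEq ι]

def single (x y : ι) : ι → ι → ℕ := fun i j => if i = x ∧ j = y then 1 else 0

/- Moving one point from `M y x` to `M x y` is written as `N + single y x = M + single x y`,
which avoids truncated subtraction. -/

lemma exists_add_single_eq (h : 0 < M x y) : ∃ N, N + single x y = M :=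
  ⟨fun i j => M i j - single x y i j, by
    funext i j; simp only [Pi.add_apply, single]; split_ifs <;> grind⟩

lemma exists_transfer (h : 0 < M y x) : ∃ N, N + single y x = M + single x y := by
  obtain ⟨N, hN⟩ := exists_add_single_eq h
  exact ⟨N + single x y, by rw [← hN, add_right_comm]⟩

lemma le_of_transfer (hN : N + single y x = M + single x y) {i j : ι} (hij : ¬(i = y ∧ j = x)) :
    M i j ≤ N i j := by
  have := congr_fun₂ hN i j
  simp only [Pi.add_apply, single] at this
  split_ifs at this <;> omega

lemma pair_sum_eq_of_transfer (hN : N + single y x = M + single x y) (i j : ι) :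
    N i j + N j i = M i j + M j i := by
  have h₁ := congr_fun₂ hN i j
  have h₂ := congr_fun₂ hN j i
  simp only [Pi.add_apply, single] at h₁ h₂
  split_ifs at h₁ h₂ <;> grind

lemma IsABTournament.add_single (hM : IsABTournament a b M) (hxy : x ≠ y)
    (hb : M x y + M y x < b) : IsABTournament a b (M + single x y) := by
  refine ⟨fun i => ?_, fun i j hij => ?_⟩
  · simp only [Pi.add_apply, single, hM.1 i]
    grind
  · have := hM.2 i j hij
    simp only [Pi.add_apply, single]
    split_ifs <;> grind

lemma IsABTournament.of_add_single_eq (hM : IsABTournament a b M) (hN : N + single x y = M)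
    (ha : a < M x y + M y x) : IsABTournament a b N := by
  subst hN
  refine ⟨fun i => ?_, fun i j hij => ?_⟩
  · have := hM.1 i
    simp only [Pi.add_apply] at this
    omega
  · have := hM.2 i j hij
    simp only [Pi.add_apply, single] at this ha ⊢
    split_ifs at this ha <;> grind

lemma IsABTournament.of_transfer (hM : IsABTournament a b M)
    (hN : N + single y x = M + single x y) : IsABTournament a b N := by
  refine ⟨fun i => ?_, fun i j hij => pair_sum_eq_of_transfer hN i j ▸ hM.2 i j hij⟩
  have := congr_fun₂ hN i i
  simp only [Pi.add_apply, single, hM.1 i] at this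
  grind

lemma sum_sum_insert (M : ι → ι → ℕ) {s : Finset ι} (hx : x ∉ s) :
    ∑ i ∈ insert x s, ∑ j ∈ insert x s, M i j
      = ∑ i ∈ s, ∑ j ∈ s, M i j + ∑ j ∈ s, (M x j + M j x) + M x x := by
  simp only [sum_insert hx, sum_add_distrib]
  ring

lemma mul_choose_two_le_sum_sum (s : Finset ι)
    (h : ∀ i ∈ s, ∀ j ∈ s, i ≠ j → c ≤ M i j + M j i) :
    c * (#s).choose 2 ≤ ∑ i ∈ s, ∑ j ∈ s, M i j := by
  induction s using Finset.induction_on with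
  | empty => simp
  | insert x s hx ih =>
    have hs := ih fun i hi j hj => h i (mem_insert_of_mem hi) j (mem_insert_of_mem hj)
    have hxs : #s * c ≤ ∑ j ∈ s, (M x j + M j x) := by
      simpa using card_nsmul_le_sum s _ c fun j hj =>
        h x (mem_insert_self x s) j (mem_insert_of_mem hj) (ne_of_mem_of_not_mem hj hx).symm
    rw [sum_sum_insert M hx, card_insert_of_notMem hx, Nat.choose_succ_succ', Nat.choose_one_right]
    nlinarith

lemma sum_sum_le_mul_choose_two (hdiag : ∀ i, M i i = 0) (s : Finset ι)
    (h : ∀ i ∈ s, ∀ j ∈ s, i ≠ j → M i j + M j i ≤ c) :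
    ∑ i ∈ s, ∑ j ∈ s, M i j ≤ c * (#s).choose 2 := by
  induction s using Finset.induction_on with
  | empty => simp
  | insert x s hx ih =>
    have hs := ih fun i hi j hj => h i (mem_insert_of_mem hi) j (mem_insert_of_mem hj)
    have hxs : ∑ j ∈ s, (M x j + M j x) ≤ #s * c := by
      simpa using sum_le_card_nsmul s _ c fun j hj =>
        h x (mem_insert_self x s) j (mem_insert_of_mem hj) (ne_of_mem_of_not_mem hj hx).symm
    rw [sum_sum_insert M hx, card_insert_of_notMem hx, Nat.choose_succ_succ', Nat.choose_one_right,
      hdiag]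
    nlinarith

end

variable [Fintype ι] {D : ι → ℕ}

def score (M : ι → ι → ℕ) (i : ι) : ℕ := ∑ j, M i j

lemma score_add (M N : ι → ι → ℕ) : score (M + N) = score M + score N :=
  funext fun _ => sum_add_distrib

def defect (D σ : ι → ℕ) : ℕ := ∑ i, (σ i).dist (D i)

def IsClosest (a b : ℕ) (D : ι → ℕ) (M : ι → ι → ℕ) : Prop :=
  IsABTournament a b M ∧ ∀ N, IsABTournament a b N → defect D (score M) ≤ defect D (score N)

lemma exists_isClosest (hab : a ≤ b) (D : ι → ℕ) : ∃ M, IsClosest a b D M := by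
  obtain ⟨M₀, hM₀⟩ := exists_isABTournament (ι := ι) hab
  obtain ⟨M, hM, hmin⟩ := (measure fun M => defect D (score M)).wf.has_min
    {M | IsABTournament a b M} ⟨M₀, hM₀⟩
  exact ⟨M, hM, fun N hN => not_lt.1 (hmin N hN)⟩

variable [DecidableEq ι]

lemma score_single (x y : ι) : score (single x y) = Pi.single x 1 := by
  funext i
  by_cases hi : i = x <;> simp [score, single, hi]

lemma score_of_transfer (hN : N + single y x = M + single x y) (i : ι) :
    score N i + (Pi.single y 1 : ι → ℕ) i = score M i + (Pi.single x 1 : ι → ℕ) i := by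
  simpa [score_add, score_single] using congr_fun (congrArg score hN) i

lemma score_left_of_transfer (hN : N + single y x = M + single x y) (hxy : x ≠ y) :
    score N x = score M x + 1 := by
  simpa [hxy] using score_of_transfer hN x

lemma score_right_of_transfer (hN : N + single y x = M + single x y) (hxy : x ≠ y) :
    score N y + 1 = score M y := by
  simpa [hxy.symm] using score_of_transfer hN y

lemma score_of_transfer_of_ne (hN : N + single y x = M + single x y) {i : ι} (hix : i ≠ x)
    (hiy : i ≠ y) : score N i = score M i := by
  simpa [hix, hiy] using score_of_transfer hN i

lemma sum_score_eq (M : ι → ι → ℕ) (s : Finset ι) :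
    ∑ i ∈ s, score M i = ∑ i ∈ s, ∑ j ∈ s, M i j + ∑ i ∈ s, ∑ j ∈ sᶜ, M i j := by
  rw [← sum_add_distrib]
  exact sum_congr rfl fun i _ => (sum_add_sum_compl s (M i)).symm

lemma IsABTournament.mul_choose_two_le_sum_score (hM : IsABTournament a b M) (s : Finset ι) :
    a * (#s).choose 2 ≤ ∑ i ∈ s, score M i := by
  rw [sum_score_eq]
  exact le_add_right (mul_choose_two_le_sum_sum s fun i _ j _ hij => (hM.2 i j hij).1)

lemma IsABTournament.sum_score_le (hM : IsABTournament a b M) (s : Finset ι) :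
    ∑ i ∈ s, score M i ≤ b * ((#s).choose 2 + #s * #sᶜ) := by
  have hint := sum_sum_le_mul_choose_two hM.1 s fun i _ j _ hij => (hM.2 i j hij).2
  have hcross : ∑ i ∈ s, ∑ j ∈ sᶜ, M i j ≤ #s * (#sᶜ * b) := by
    simpa using sum_le_card_nsmul s _ _ fun i hi => sum_le_card_nsmul sᶜ _ b fun j hj =>
      le_trans (Nat.le_add_right _ _) (hM.2 i j (ne_of_mem_of_not_mem hi (mem_compl.1 hj))).2
  rw [sum_score_eq]
  nlinarith

lemma defect_add_single (D σ : ι → ℕ) (x : ι) :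
    defect D (σ + Pi.single x 1) + (σ x).dist (D x) = defect D σ + (σ x + 1).dist (D x) := by
  have hrest : ∑ i ∈ univ.erase x, ((σ + Pi.single x 1 : ι → ℕ) i).dist (D i)
      = ∑ i ∈ univ.erase x, (σ i).dist (D i) :=
    sum_congr rfl fun i hi => by simp [ne_of_mem_erase hi]
  rw [defect, defect, ← add_sum_erase _ _ (mem_univ x), ← add_sum_erase _ _ (mem_univ x), hrest]
  simp only [Pi.add_apply, Pi.single_eq_same]
  ring

lemma defect_of_transfer (hN : N + single y x = M + single x y) (hxy : x ≠ y) :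
    defect D (score N) + (score M x).dist (D x) + (score M y).dist (D y)
      = defect D (score M) + (score N x).dist (D x) + (score N y).dist (D y) := by
  have hσ : score N + Pi.single y 1 = score M + Pi.single x 1 := by
    rw [← score_single, ← score_single, ← score_add, ← score_add, hN]
  have h₁ := defect_add_single D (score M) x
  have h₂ := defect_add_single D (score N) y
  rw [hσ] at h₂
  rw [score_left_of_transfer hN hxy, ← score_right_of_transfer hN hxy]
  omega

lemma IsClosest.pair_sum_eq_of_score_lt (h : IsClosest a b D M) (hx : score M x < D x)
    (hxy : x ≠ y) : M x y + M y x = b := by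
  by_contra hne
  have hle := h.2 _ (h.1.add_single hxy (lt_of_le_of_ne (h.1.2 x y hxy).2 hne))
  have := defect_add_single D (score M) x
  rw [score_add, score_single] at hle
  unfold Nat.dist at this
  omega

lemma IsClosest.pair_sum_eq_of_lt_score (h : IsClosest a b D M) (hx : D x < score M x)
    (hxy : x ≠ y) (hpos : 0 < M x y) : M x y + M y x = a := by
  by_contra hne
  obtain ⟨N, hN⟩ := exists_add_single_eq hpos
  have hle := h.2 _ (h.1.of_add_single_eq hN (lt_of_le_of_ne (h.1.2 x y hxy).1 (Ne.symm hne)))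
  have hσ : score N + Pi.single x 1 = score M := by rw [← hN, score_add, score_single]
  have := defect_add_single D (score N) x
  have hx' := congr_fun hσ x
  rw [hσ] at this
  simp only [Pi.add_apply, Pi.single_eq_same] at hx'
  unfold Nat.dist at this
  omega

lemma IsClosest.transfer_of_score_lt (h : IsClosest a b D M)
    (hN : N + single y x = M + single x y) (hxy : x ≠ y) (hx : score M x < D x) :
    score M y ≤ D y ∧ IsClosest a b D N := by
  have hd := defect_of_transfer (D := D) hN hxy
  have hNv := h.1.of_transfer hN
  have hle := h.2 N hNv
  have hx' := score_left_of_transfer hN hxy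
  have hy' := score_right_of_transfer hN hxy
  unfold Nat.dist at hd
  refine ⟨by omega, hNv, fun P hP => ?_⟩
  have := h.2 P hP
  omega

lemma IsClosest.transfer_of_lt_score (h : IsClosest a b D M)
    (hN : N + single y x = M + single x y) (hxy : x ≠ y) (hy : D y < score M y) :
    D x ≤ score M x ∧ IsClosest a b D N := by
  have hd := defect_of_transfer (D := D) hN hxy
  have hNv := h.1.of_transfer hN
  have hle := h.2 N hNv
  have hx' := score_left_of_transfer hN hxy
  have hy' := score_right_of_transfer hN hxy
  unfold Nat.dist at hd
  refine ⟨by omega, hNv, fun P hP => ?_⟩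
  have := h.2 P hP
  omega

lemma IsClosest.score_le_and_saturated_of_isChain {s : ι} {l : List ι} (h : IsClosest a b D M)
    (hs : score M s < D s) (hchain : (s :: l).IsChain fun x y => 0 < M y x)
    (hnodup : (s :: l).Nodup) :
    ∀ v ∈ s :: l, score M v ≤ D v ∧ ∀ w, w ≠ v → M v w + M w v = b := by
  induction l generalizing M s with
  | nil =>
    intro v hv
    obtain rfl := List.mem_singleton.1 hv
    exact ⟨hs.le, fun w hw => h.pair_sum_eq_of_score_lt hs hw.symm⟩
  | cons u t ih =>
    intro v hv
    rw [List.isChain_cons_cons] at hchain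
    obtain ⟨hs_notMem, hnodup⟩ := List.nodup_cons.1 hnodup
    rcases List.mem_cons.1 hv with rfl | hv
    · exact ⟨hs.le, fun w hw => h.pair_sum_eq_of_score_lt hs hw.symm⟩
    have hsu : s ≠ u := fun e => hs_notMem (e ▸ List.mem_cons_self)
    have hvs : v ≠ s := fun e => hs_notMem (e ▸ hv)
    -- Taking a point from `u` moves the deficit to `u`; the rest of the chain avoids `s`, so its
    -- positive entries survive the transfer.
    obtain ⟨N, hN⟩ := exists_transfer hchain.1
    obtain ⟨hu, hNc⟩ := h.transfer_of_score_lt hN hsu hs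
    have hNchain : (u :: t).IsChain fun x y => 0 < N y x :=
      hchain.2.imp_of_mem_imp fun p q hp _ hpq =>
        lt_of_lt_of_le hpq (le_of_transfer hN fun e => hs_notMem (e.2 ▸ hp))
    have hNu := score_right_of_transfer hN hsu
    obtain ⟨hNv, hpair⟩ := ih hNc (by omega) hNchain hnodup v hv
    refine ⟨?_, fun w hw => pair_sum_eq_of_transfer hN v w ▸ hpair w hw⟩
    rcases eq_or_ne v u with rfl | hvu
    · exact hu
    · rwa [← score_of_transfer_of_ne hN hvs hvu]

lemma IsClosest.le_score_and_tight_of_isChain {s : ι} {l : List ι} (h : IsClosest a b D M)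
    (hs : D s < score M s) (hchain : (s :: l).IsChain fun x y => 0 < M x y)
    (hnodup : (s :: l).Nodup) :
    ∀ v ∈ s :: l, D v ≤ score M v ∧ ∀ w, w ≠ v → 0 < M v w → M v w + M w v = a := by
  induction l generalizing M s with
  | nil =>
    intro v hv
    obtain rfl := List.mem_singleton.1 hv
    exact ⟨hs.le, fun w hw => h.pair_sum_eq_of_lt_score hs hw.symm⟩
  | cons u t ih =>
    intro v hv
    rw [List.isChain_cons_cons] at hchain
    obtain ⟨hs_notMem, hnodup⟩ := List.nodup_cons.1 hnodup
    rcases List.mem_cons.1 hv with rfl | hv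
    · exact ⟨hs.le, fun w hw => h.pair_sum_eq_of_lt_score hs hw.symm⟩
    have hsu : s ≠ u := fun e => hs_notMem (e ▸ List.mem_cons_self)
    have hvs : v ≠ s := fun e => hs_notMem (e ▸ hv)
    obtain ⟨N, hN⟩ := exists_transfer hchain.1
    obtain ⟨hu, hNc⟩ := h.transfer_of_lt_score hN hsu.symm hs
    have hNchain : (u :: t).IsChain fun x y => 0 < N x y :=
      hchain.2.imp_of_mem_imp fun p q hp _ hpq =>
        lt_of_lt_of_le hpq (le_of_transfer hN fun e => hs_notMem (e.1 ▸ hp))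
    have hNu := score_left_of_transfer hN hsu.symm
    obtain ⟨hNv, hpair⟩ := ih hNc (by omega) hNchain hnodup v hv
    refine ⟨?_, fun w hw hpos => pair_sum_eq_of_transfer hN v w ▸
      hpair w hw (lt_of_lt_of_le hpos (le_of_transfer hN fun e => hvs e.1))⟩
    rcases eq_or_ne v u with rfl | hvu
    · exact hu
    · rwa [← score_of_transfer_of_ne hN hvu hvs]

lemma IsClosest.exists_sum_gt_of_score_lt {s : ι} (h : IsClosest a b D M)
    (hs : score M s < D s) : ∃ R : Finset ι, b * ((#R).choose 2 + #R * #Rᶜ) < ∑ i ∈ R, D i := by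
  classical
  let R : Finset ι := {v | ReflTransGen (fun x y => 0 < M y x) s v}
  have hsR : s ∈ R := mem_filter.2 ⟨mem_univ _, .refl⟩
  have hgood : ∀ v ∈ R, score M v ≤ D v ∧ ∀ w, w ≠ v → M v w + M w v = b := by
    intro v hv
    obtain ⟨l, hchain, hnodup, hlast⟩ :=
      List.exists_nodup_isChain_cons_of_relationReflTransGen (mem_filter.1 hv).2
    exact h.score_le_and_saturated_of_isChain hs hchain hnodup v (hlast ▸ List.getLast_mem _)
  have hout : ∀ v ∈ R, ∀ w ∈ Rᶜ, M v w = b := by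
    intro v hv w hw
    have hwR : w ∉ R := mem_compl.1 hw
    have hwv : M w v = 0 := by
      by_contra hpos
      exact hwR (mem_filter.2 ⟨mem_univ _, (mem_filter.1 hv).2.tail (Nat.pos_of_ne_zero hpos)⟩)
    have := (hgood v hv).2 w (ne_of_mem_of_not_mem hv hwR).symm
    omega
  have hint := mul_choose_two_le_sum_sum (M := M) R fun i hi j _ hij =>
    ((hgood i hi).2 j hij.symm).ge
  have hcross : ∑ i ∈ R, ∑ j ∈ Rᶜ, M i j = #R * (#Rᶜ * b) := by
    rw [sum_congr rfl fun i hi => sum_congr rfl (hout i hi)]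
    simp [mul_comm]
  refine ⟨R, ?_⟩
  calc b * ((#R).choose 2 + #R * #Rᶜ)
      ≤ ∑ i ∈ R, ∑ j ∈ R, M i j + ∑ i ∈ R, ∑ j ∈ Rᶜ, M i j := by rw [hcross]; nlinarith
    _ = ∑ i ∈ R, score M i := (sum_score_eq M R).symm
    _ < ∑ i ∈ R, D i := sum_lt_sum (fun v hv => (hgood v hv).1) ⟨s, hsR, hs⟩

lemma IsClosest.exists_sum_lt_of_lt_score {s : ι} (h : IsClosest a b D M)
    (hs : D s < score M s) : ∃ R : Finset ι, ∑ i ∈ R, D i < a * (#R).choose 2 := by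
  classical
  let R : Finset ι := {v | ReflTransGen (fun x y => 0 < M x y) s v}
  have hsR : s ∈ R := mem_filter.2 ⟨mem_univ _, .refl⟩
  have hgood : ∀ v ∈ R, D v ≤ score M v ∧ ∀ w, w ≠ v → 0 < M v w → M v w + M w v = a := by
    intro v hv
    obtain ⟨l, hchain, hnodup, hlast⟩ :=
      List.exists_nodup_isChain_cons_of_relationReflTransGen (mem_filter.1 hv).2
    exact h.le_score_and_tight_of_isChain hs hchain hnodup v (hlast ▸ List.getLast_mem _)
  have hout : ∀ v ∈ R, ∀ w ∈ Rᶜ, M v w = 0 := by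
    intro v hv w hw
    by_contra hpos
    exact mem_compl.1 hw
      (mem_filter.2 ⟨mem_univ _, (mem_filter.1 hv).2.tail (Nat.pos_of_ne_zero hpos)⟩)
  have hint := sum_sum_le_mul_choose_two h.1.1 R fun i hi j hj hij => by
    rcases Nat.eq_zero_or_pos (M i j) with hij₀ | hij₀
    · rcases Nat.eq_zero_or_pos (M j i) with hji₀ | hji₀
      · omega
      · rw [add_comm]
        exact ((hgood j hj).2 i hij hji₀).le
    · exact ((hgood i hi).2 j hij.symm hij₀).le
  refine ⟨R, ?_⟩
  calc ∑ i ∈ R, D i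
      < ∑ i ∈ R, score M i := sum_lt_sum (fun v hv => (hgood v hv).1) ⟨s, hsR, hs⟩
    _ = ∑ i ∈ R, ∑ j ∈ R, M i j := by
      rw [sum_score_eq, sum_eq_zero fun i hi => sum_eq_zero (hout i hi), add_zero]
    _ ≤ a * (#R).choose 2 := hint

/-- The points won by a set `s` lie between the `a·C(|s|,2)` its members must share among
themselves and the `b·(C(|s|,2) + |s|·|sᶜ|)` of all pairs meeting `s`. -/
def SubsetSumBounds (a b : ℕ) (D : ι → ℕ) : Prop :=
  ∀ s : Finset ι, a * (#s).choose 2 ≤ ∑ i ∈ s, D i ∧ ∑ i ∈ s, D i ≤ b * ((#s).choose 2 + #s * #sᶜ)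

theorem exists_isABTournament_score_eq_iff (hab : a ≤ b) :
    (∃ M, IsABTournament a b M ∧ score M = D) ↔ SubsetSumBounds a b D := by
  constructor
  · rintro ⟨M, hM, rfl⟩ s
    exact ⟨hM.mul_choose_two_le_sum_score s, hM.sum_score_le s⟩
  · intro hD
    obtain ⟨M, hM⟩ := exists_isClosest hab D
    refine ⟨M, hM.1, funext fun i => ?_⟩
    rcases lt_trichotomy (score M i) (D i) with hi | hi | hi
    · obtain ⟨R, hR⟩ := hM.exists_sum_gt_of_score_lt hi
      exact absurd (hD R).2 hR.not_ge
    · exact hi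
    · obtain ⟨R, hR⟩ := hM.exists_sum_lt_of_lt_score hi
      exact absurd (hD R).1 hR.not_ge

end PointMatrix

section Prefix

variable {n a b : ℕ} {D : Fin n → ℕ}

lemma Monotone.sum_val_lt_card_le_sum (hD : Monotone D) (s : Finset (Fin n)) :
    ∑ i : Fin n with i.val < #s, D i ≤ ∑ i ∈ s, D i := by
  induction s using Finset.induction_on_max with
  | empty => simp
  | insert x t hlt ih =>
    have hxt : x ∉ t := fun hx => lt_irrefl x (hlt x hx)
    have hcard : #t ≤ x :=
      (card_le_card fun y hy => mem_Iio.2 (hlt y hy)).trans_eq (Fin.card_Iio x)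
    have hprefix : univ.filter (fun i : Fin n => i.val < #t + 1)
        = insert ⟨#t, by omega⟩ (univ.filter fun i : Fin n => i.val < #t) := by
      ext i
      simp only [mem_filter, mem_univ, true_and, mem_insert, Fin.ext_iff]
      omega
    rw [card_insert_of_notMem hxt, hprefix, sum_insert (by simp), sum_insert hxt]
    exact add_le_add (hD (Fin.le_def.2 hcard)) ih

lemma Monotone.sum_val_lt_add_mul_le_sum (hD : Monotone D) {k : ℕ} {i : Fin n}
    (hi : i.val < k) : ∑ j : Fin n with j.val < k, D j + (n - k) * D i ≤ ∑ j, D j := by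
  rw [← sum_filter_add_sum_filter_not univ (fun j : Fin n => j.val < k)]
  have hcard : n - k ≤ #{j : Fin n | ¬j.val < k} := by
    rw [filter_not, card_sdiff_of_subset (filter_subset _ _), Fin.card_filter_val_lt, card_univ,
      Fintype.card_fin]
    omega
  have hsum := card_nsmul_le_sum {j : Fin n | ¬j.val < k} D (D i) fun j hj =>
    hD (Fin.le_def.2 (by simp only [mem_filter] at hj; omega))
  rw [smul_eq_mul] at hsum
  nlinarith

/-- The second bound is `S_n − S_k ≤ b·(B_n − B_k)`, written without subtraction. -/
def PrefixSumBounds (a b : ℕ) (D : Fin n → ℕ) : Prop :=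
  ∀ k ≤ n, a * k.choose 2 ≤ ∑ i : Fin n with i.val < k, D i ∧
    ∑ i, D i + b * k.choose 2 ≤ ∑ i : Fin n with i.val < k, D i + b * n.choose 2

lemma subsetSumBounds_iff_prefixSumBounds (hD : Monotone D) :
    PointMatrix.SubsetSumBounds a b D ↔ PrefixSumBounds a b D := by
  constructor
  · intro h k hk
    set P : Finset (Fin n) := univ.filter fun i : Fin n => i.val < k
    have hP : #P = k := by simp [P, Fin.card_filter_val_lt, hk]
    have hPc : #Pᶜ = n - k := by rw [card_compl, Fintype.card_fin, hP]
    have hlow := (h P).1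
    have hup := (h Pᶜ).2
    rw [hP] at hlow
    rw [compl_compl, hP, hPc] at hup
    have hsum := sum_add_sum_compl P D
    have hchoose := Nat.choose_two_eq_of_le hk
    exact ⟨hlow, by rw [← hsum, hchoose]; nlinarith⟩
  · intro h s
    have hs : #s ≤ n := by simpa using card_le_univ s
    have hsc : #sᶜ = n - #s := by rw [card_compl, Fintype.card_fin]
    have hlow := hD.sum_val_lt_card_le_sum s
    have hlowc := hD.sum_val_lt_card_le_sum sᶜ
    rw [hsc] at hlowc
    have hsum := sum_add_sum_compl s D
    have hup := (h (n - #s) (Nat.sub_le _ _)).2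
    have hchoose := Nat.choose_two_eq_of_le (Nat.sub_le n #s)
    rw [Nat.sub_sub_self hs] at hchoose
    rw [hsc]
    exact ⟨(h #s hs).1.trans hlow, by nlinarith⟩

lemma Spart_eq_sum (n : ℕ) (D : Fin n → ℕ) (k : ℕ) :
    Spart n D k = ((∑ i : Fin n with i.val < k, D i : ℕ) : ℤ) := by
  simp [Spart, sum_filter]

lemma Spart_self (n : ℕ) (D : Fin n → ℕ) : Spart n D n = ((∑ i, D i : ℕ) : ℤ) := by
  simp [Spart]

lemma Bbin_eq_choose (k : ℕ) : Bbin k = (k.choose 2 : ℤ) := by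
  rw [Bbin, Nat.choose_two_right]

lemma mul_Bbin_zero_sub_Spart_zero : (b : ℤ) * Bbin 0 - Spart n D 0 = 0 := by
  simp [Bbin, Spart]

lemma le_Lloss {j k : ℕ} (hjk : j ≤ k) : (b : ℤ) * Bbin j - Spart n D j ≤ Lloss n D b k := by
  induction k with
  | zero =>
    rw [Nat.le_zero.1 hjk, mul_Bbin_zero_sub_Spart_zero]
    rfl
  | succ k ih =>
    rcases Nat.of_le_succ hjk with hjk | rfl
    · exact (ih hjk).trans (le_max_left _ _)
    · exact le_max_right _ _

lemma Lloss_le {k : ℕ} {c : ℤ} (h : ∀ j ≤ k, (b : ℤ) * Bbin j - Spart n D j ≤ c) :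
    Lloss n D b k ≤ c := by
  induction k with
  | zero => simpa [Lloss, mul_Bbin_zero_sub_Spart_zero] using h 0 le_rfl
  | succ k ih => exact max_le (ih fun j hj => h j (hj.trans k.le_succ)) (h _ le_rfl)

lemma prefixSumBounds_iff (hD : Monotone D) :
    PrefixSumBounds a b D ↔
      ∀ k : ℕ, ∀ _hk1 : 1 ≤ k, ∀ _hk2 : k ≤ n,
        (a : ℤ) * Bbin k ≤ Spart n D k ∧
        Spart n D k ≤
          (b : ℤ) * Bbin n - Lloss n D b k - ((n - k : ℕ) : ℤ) * (D ⟨k - 1, by omega⟩ : ℤ) := by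
  have hup_iff : ∀ k, ∑ i, D i + b * k.choose 2 ≤ ∑ i : Fin n with i.val < k, D i + b * n.choose 2
      ↔ (b : ℤ) * Bbin k - Spart n D k ≤ b * Bbin n - Spart n D n := by
    intro k
    rw [Spart_eq_sum, Spart_self, Bbin_eq_choose, Bbin_eq_choose, sub_le_sub_iff,
      ← Nat.cast_le (α := ℤ)]
    push_cast
    constructor <;> intro h <;> linarith
  constructor
  · intro h k hk1 hk2
    have hL : Lloss n D b k ≤ b * Bbin n - Spart n D n :=
      Lloss_le fun j hj => (hup_iff j).1 (h j (hj.trans hk2)).2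
    have htail : Spart n D k + ((n - k : ℕ) : ℤ) * (D ⟨k - 1, by omega⟩ : ℤ) ≤ Spart n D n := by
      rw [Spart_eq_sum, Spart_self]
      exact_mod_cast hD.sum_val_lt_add_mul_le_sum (i := ⟨k - 1, by omega⟩) (by simp only; omega)
    refine ⟨?_, by linarith⟩
    rw [Bbin_eq_choose, Spart_eq_sum]
    exact_mod_cast (h k hk2).1
  · intro h k hk
    refine ⟨?_, (hup_iff k).2 ?_⟩
    · rcases Nat.eq_zero_or_pos k with rfl | hk1
      · simp
      · have := (h k hk1 hk).1
        rwa [Bbin_eq_choose, Spart_eq_sum, ← Nat.cast_mul, Nat.cast_le] at this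
    · rcases eq_or_lt_of_le hk with rfl | hkn
      · exact le_rfl
      · have := (h n (by omega) le_rfl).2
        have hL := le_Lloss (n := n) (D := D) (b := b) hk
        simp only [Nat.sub_self, Nat.cast_zero, zero_mul, sub_zero] at this
        linarith

end Prefix

lemma isScoreSeqAB_iff_exists {n a b : ℕ} {D : Fin n → ℕ} :
    IsScoreSeqAB n a b D ↔
      ∃ M, PointMatrix.IsABTournament a b M ∧ PointMatrix.score M = D :=
  ⟨fun ⟨M, hdiag, hpair, hscore⟩ => ⟨M, ⟨hdiag, hpair⟩, funext hscore⟩,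
    fun ⟨M, ⟨hdiag, hpair⟩, hscore⟩ => ⟨M, hdiag, hpair, congrFun hscore⟩⟩

/-- For `n ≥ 2` and `a ≤ b`, a nondecreasing sequence `D` of nonnegative
integers is the score sequence of some `(a,b,n)`-tournament iff
`a·B_k ≤ S_k ≤ b·B_n − L_k − (n−k)·d_k` for every `1 ≤ k ≤ n`. -/
theorem isScoreSeqAB_iff (n : ℕ) (a b : ℕ) (hab : a ≤ b)
    (D : Fin n → ℕ) (hD : Monotone D) :
    IsScoreSeqAB n a b D ↔
      ∀ k : ℕ, ∀ _hk1 : 1 ≤ k, ∀ _hk2 : k ≤ n,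
        (a : ℤ) * Bbin k ≤ Spart n D k ∧
        Spart n D k ≤
          (b : ℤ) * Bbin n - Lloss n D b k - ((n - k : ℕ) : ℤ) * (D ⟨k - 1, by omega⟩ : ℤ) :=
  isScoreSeqAB_iff_exists.trans <| (PointMatrix.exists_isABTournament_score_eq_iff hab).trans <|
    (subsetSumBounds_iff_prefixSumBounds hD).trans (prefixSumBounds_iff hD)
end

section
/- Let n ≥ 2 and k ≥ 1 be integers. A nondecreasing sequence D = (d_1, d_2, …, d_n) of nonnegative integers is the score sequence of some (k,k,n)-tournament (i.e., a generalised tournament in which every pair of distinct players shares exactly k points) if and only if d_1 + ⋯ + d_n = k·B_n and d_1 + ⋯ + d_i ≥ k·B_i for every i with 1 ≤ i ≤ n, where B_i = i(i−1)/2. -/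
/-!
The players of a set `A` share at least the `k·B_|A|` points of the games among themselves, which
gives necessity. Sufficiency is Hall's theorem: match the `k·B_n` points at stake to score slots,
`d_i` of them for player `i`, each point to a slot of one of the two players of its game. Points
of games within `A` number `k·B_|A|`, and for monotone `d` the initial segments have the smallest
sums, so Hall's condition holds; the totals agree, so every slot is filled and player `i` wins
exactly `d_i` points.
-/

open Finset

structure IsKKTournament {α : Type*} (k : ℕ) (M : α → α → ℕ) : Prop where
  diag : ∀ i, M i i = 0
  add_swap : ∀ i j, i ≠ j → M i j + M j i = k

namespace IsKKTournament

variable {α : Type*} [DecidableEq α] {k : ℕ} {M : α → α → ℕ}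

theorem sum_sum_eq_mul_choose_two (hM : IsKKTournament k M) (A : Finset α) :
    ∑ i ∈ A, ∑ j ∈ A, M i j = k * (#A).choose 2 := by
  induction A using Finset.induction_on with
  | empty => simp
  | insert a A ha ih =>
    have hgames : ∑ j ∈ A, (M a j + M j a) = #A * k := by
      rw [sum_congr rfl fun j hj => hM.add_swap a j (ne_of_mem_of_not_mem hj ha).symm]
      simp
    rw [sum_add_distrib] at hgames
    rw [sum_insert ha, sum_insert ha, sum_congr rfl fun i _ => sum_insert ha, sum_add_distrib,
      ih, hM.diag, card_insert_of_notMem ha, Nat.choose_succ_succ', Nat.choose_one_right]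
    linarith

theorem mul_choose_two_le_sum_sum [Fintype α] (hM : IsKKTournament k M) (A : Finset α) :
    k * (#A).choose 2 ≤ ∑ i ∈ A, ∑ j, M i j := by
  rw [← hM.sum_sum_eq_mul_choose_two A]
  exact sum_le_sum fun i _ => sum_le_sum_of_subset (subset_univ A)

end IsKKTournament

theorem Monotone.sum_filter_lt_card_le_sum {n : ℕ} {β : Type*} [AddCommMonoid β] [Preorder β]
    [IsOrderedCancelAddMonoid β] {D : Fin n → β} (hD : Monotone D) (A : Finset (Fin n)) :
    ∑ i ∈ {i : Fin n | (i : ℕ) < #A}, D i ≤ ∑ i ∈ A, D i := by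
  set P : Finset (Fin n) := {i | (i : ℕ) < #A}
  have hcard : #(P \ A) = #(A \ P) := by
    refine card_sdiff_comm ?_
    simpa [P, Fin.card_filter_val_lt] using card_le_univ A
  have hsplit : ∀ x ∈ P \ A, ∀ y ∈ A \ P, x ≤ y := by
    intro x hx y hy
    simp only [P, mem_sdiff, mem_filter, mem_univ, true_and, not_lt] at hx hy
    exact Fin.le_def.2 (by omega)
  rw [← sum_sdiff_le_sum_sdiff]
  rcases (P \ A).eq_empty_or_nonempty with hempty | hne
  · rw [hempty, card_empty, eq_comm, card_eq_zero] at hcard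
    simp [hempty, hcard]
  calc ∑ i ∈ P \ A, D i ≤ #(P \ A) • D ((P \ A).max' hne) :=
        sum_le_card_nsmul _ _ _ fun x hx => hD (le_max' _ x hx)
    _ ≤ ∑ i ∈ A \ P, D i := by
        rw [hcard]
        exact card_nsmul_le_sum _ _ _ fun y hy => hD (hsplit _ (max'_mem _ hne) y hy)

theorem Finset.eq_pair_of_card_eq_two {α : Type*} [DecidableEq α] {e : Finset α} {i j : α}
    (he : #e = 2) (hi : i ∈ e) (hj : j ∈ e) (hij : i ≠ j) : e = {i, j} :=
  (eq_of_subset_of_card_le (by simp [insert_subset_iff, hi, hj]) (by rw [he, card_pair hij])).symm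

section PointUnit

variable {α : Type*} [Fintype α] [DecidableEq α] {k : ℕ}

/-- `(e, u)` is the `u`-th of the `k` points at stake in the game between the two players of `e`. -/
abbrev PointUnit (α : Type*) (k : ℕ) := {e : Finset α // #e = 2} × Fin k

def tournamentOfWinner (w : PointUnit α k → α) (i j : α) : ℕ :=
  #{x | w x = i ∧ j ∈ (x.1 : Finset α) ∧ j ≠ i}

theorem card_filter_pointUnit_eq_pair {i j : α} (hij : i ≠ j) :
    #{x : PointUnit α k | (x.1 : Finset α) = {i, j}} = k := by
  have : ({x : PointUnit α k | (x.1 : Finset α) = {i, j}} : Finset _) =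
      {⟨{i, j}, card_pair hij⟩} ×ˢ univ := by
    ext x
    simp only [mem_filter, mem_univ, true_and, mem_product, mem_singleton, and_true,
      Subtype.ext_iff]
  simp [this]

theorem isKKTournament_tournamentOfWinner {w : PointUnit α k → α}
    (hw : ∀ x, w x ∈ (x.1 : Finset α)) : IsKKTournament k (tournamentOfWinner w) where
  diag i := by simp [tournamentOfWinner]
  add_swap i j hij := by
    have hwon_by_i : ∀ x : PointUnit α k, w x = i ∧ j ∈ (x.1 : Finset α) ∧ j ≠ i ↔
        (x.1 : Finset α) = {i, j} ∧ w x = i := by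
      intro x
      constructor
      · rintro ⟨rfl, hj, hji⟩
        exact ⟨eq_pair_of_card_eq_two x.1.2 (hw x) hj hji.symm, rfl⟩
      · rintro ⟨he, rfl⟩
        simp [he, Ne.symm hij]
    have hwon_by_j : ∀ x : PointUnit α k, w x = j ∧ i ∈ (x.1 : Finset α) ∧ i ≠ j ↔
        (x.1 : Finset α) = {i, j} ∧ ¬ w x = i := by
      intro x
      constructor
      · rintro ⟨rfl, hi, hij⟩
        exact ⟨eq_pair_of_card_eq_two x.1.2 hi (hw x) hij, Ne.symm hij⟩
      · rintro ⟨he, hwi⟩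
        have := hw x
        simp_all
    rw [tournamentOfWinner, tournamentOfWinner, filter_congr fun x _ => hwon_by_i x,
      filter_congr fun x _ => hwon_by_j x, ← filter_filter, ← filter_filter,
      card_filter_add_card_filter_not, card_filter_pointUnit_eq_pair hij]

theorem sum_tournamentOfWinner {w : PointUnit α k → α} (hw : ∀ x, w x ∈ (x.1 : Finset α))
    (i : α) : ∑ j, tournamentOfWinner w i j = #{x | w x = i} := by
  simp only [tournamentOfWinner, card_filter]
  rw [sum_comm]
  refine sum_congr rfl fun x _ => ?_
  by_cases hx : w x = i
  · have hother : #((x.1 : Finset α).erase i) = 1 := by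
      rw [card_erase_of_mem (hx ▸ hw x), x.1.2]
    simp only [hx, true_and, if_true]
    rw [← card_filter, ← hother]
    congr 1
    ext j
    simp [and_comm]
  · simp [hx]

theorem card_sigma_fin_filter_fst_mem (D : α → ℕ) (A : Finset α) :
    #{σ : Σ i, Fin (D i) | σ.1 ∈ A} = ∑ i ∈ A, D i := by
  have : ({σ : Σ i, Fin (D i) | σ.1 ∈ A} : Finset _) = A.sigma fun _ => univ := by
    ext σ
    simp
  simp [this]

theorem exists_winner_card_eq {D : α → ℕ} (hsum : ∑ i, D i = k * (Fintype.card α).choose 2)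
    (hle : ∀ A : Finset α, k * (#A).choose 2 ≤ ∑ i ∈ A, D i) :
    ∃ w : PointUnit α k → α,
      (∀ x, w x ∈ (x.1 : Finset α)) ∧ ∀ i, #{x | w x = i} = D i := by
  have hall : ∀ U : Finset (PointUnit α k),
      #U ≤ #{σ : Σ i, Fin (D i) | ∃ x ∈ U, σ.1 ∈ (x.1 : Finset α)} := by
    intro U
    set A := U.biUnion fun x => (x.1 : Finset α)
    calc #U ≤ #(A.powersetCard 2 ×ˢ (univ : Finset (Fin k))) := by
          refine card_le_card_of_injOn (fun x => ((x.1 : Finset α), x.2))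
            (fun x hx => mem_product.2 ⟨mem_powersetCard.2
              ⟨subset_biUnion_of_mem (fun x : PointUnit α k => (x.1 : Finset α)) hx, x.1.2⟩,
              mem_univ _⟩) fun x _ y _ hxy => ?_
          simp only [Prod.mk.injEq] at hxy
          exact Prod.ext (Subtype.ext hxy.1) hxy.2
      _ = k * (#A).choose 2 := by
          rw [card_product, card_powersetCard, card_univ, Fintype.card_fin, mul_comm]
      _ ≤ ∑ i ∈ A, D i := hle A
      _ = _ := by
          rw [← card_sigma_fin_filter_fst_mem]
          congr 1
          ext σ
          simp [A]
  obtain ⟨f, hf, hfw⟩ := (Fintype.all_card_le_filter_rel_iff_exists_injective _).1 hall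
  have hbij : Function.Bijective f := (Fintype.bijective_iff_injective_and_card f).2
    ⟨hf, by simp [hsum, Fintype.card_finset_len, mul_comm]⟩
  refine ⟨fun x => (f x).1, hfw, fun i => ?_⟩
  rw [← sum_singleton D i, ← card_sigma_fin_filter_fst_mem]
  exact card_equiv (Equiv.ofBijective f hbij) (by simp)

theorem exists_isKKTournament_of_forall_le_sum {D : α → ℕ}
    (hsum : ∑ i, D i = k * (Fintype.card α).choose 2)
    (hle : ∀ A : Finset α, k * (#A).choose 2 ≤ ∑ i ∈ A, D i) :
    ∃ M : α → α → ℕ, IsKKTournament k M ∧ ∀ i, ∑ j, M i j = D i := by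
  obtain ⟨w, hw, hcard⟩ := exists_winner_card_eq hsum hle
  exact ⟨tournamentOfWinner w, isKKTournament_tournamentOfWinner hw,
    fun i => (sum_tournamentOfWinner hw i).trans (hcard i)⟩

end PointUnit

theorem isScoreSeq_kk_iff_general (n : ℕ) (k : ℕ)
    (D : Fin n → ℕ) (hD : Monotone D) :
    (∃ M : Fin n → Fin n → ℕ,
        (∀ i, M i i = 0) ∧
        (∀ i j, i ≠ j → M i j + M j i = k) ∧
        (∀ i, ∑ j, M i j = D i)) ↔
      ((∑ i, D i) = k * (n * (n - 1) / 2) ∧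
        ∀ m : ℕ, 1 ≤ m → m ≤ n →
          k * (m * (m - 1) / 2) ≤ ∑ i : Fin n, if (i : ℕ) < m then D i else 0) := by
  simp only [← Nat.choose_two_right, ← sum_filter]
  constructor
  · rintro ⟨M, hdiag, hswap, hscore⟩
    have hM : IsKKTournament k M := ⟨hdiag, hswap⟩
    simp only [← hscore]
    refine ⟨by simpa using hM.sum_sum_eq_mul_choose_two univ, fun m _ hm => ?_⟩
    simpa [Fin.card_filter_val_lt, hm] using
      hM.mul_choose_two_le_sum_sum {i : Fin n | (i : ℕ) < m}
  · rintro ⟨htotal, hprefix⟩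
    have hsubset (A : Finset (Fin n)) : k * (#A).choose 2 ≤ ∑ i ∈ A, D i := by
      rcases Nat.eq_zero_or_pos #A with hA | hA
      · simp [hA]
      · exact (hprefix #A hA (by simpa using card_le_univ A)).trans
          (hD.sum_filter_lt_card_le_sum A)
    obtain ⟨M, hM, hscore⟩ := exists_isKKTournament_of_forall_le_sum (D := D)
      (by rwa [Fintype.card_fin]) hsubset
    exact ⟨M, hM.diag, hM.add_swap, hscore⟩

/-- For `n ≥ 2` and `k ≥ 1`, a nondecreasing sequence `D` of nonnegative
integers is the score sequence of some `(k,k,n)`-tournament iff `∑ D = k·B_n` and the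
partial sum `d_1 + ⋯ + d_m` is at least `k·B_m` for every `1 ≤ m ≤ n`, where `B_m = m(m-1)/2`. -/
theorem isScoreSeq_kk_iff (n : ℕ) (hn : 2 ≤ n) (k : ℕ) (hk : 1 ≤ k)
    (D : Fin n → ℕ) (hD : Monotone D) :
    (∃ M : Fin n → Fin n → ℕ,
        (∀ i, M i i = 0) ∧
        (∀ i j, i ≠ j → M i j + M j i = k) ∧
        (∀ i, ∑ j, M i j = D i)) ↔
      ((∑ i, D i) = k * (n * (n - 1) / 2) ∧
        ∀ m : ℕ, 1 ≤ m → m ≤ n →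
          k * (m * (m - 1) / 2) ≤ ∑ i : Fin n, if (i : ℕ) < m then D i else 0) :=
  isScoreSeq_kk_iff_general n k D hD
end

section
/- Let n ≥ 2 and let D = (d_1, d_2, …, d_n) be a nondecreasing sequence of nonnegative integers. Then there exist nonnegative integers f and g and an n×n matrix M of nonnegative integers with zero diagonal whose i-th row sum equals d_i for every i, such that f = max_{i<j} (M(i,j) + M(j,i)), g = min_{i<j} (M(i,j) + M(j,i)), and for every n×n matrix M' of nonnegative integers with zero diagonal whose i-th row sum equals d_i for every i one has max_{i<j} (M'(i,j) + M'(j,i)) ≥ f and min_{i<j} (M'(i,j) + M'(j,i)) ≤ g. In particular, a single realization of D simultaneously attains the minimum possible value of F and the maximum possible value of G. -/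
/-!
Take a realization `x` minimising `Φ = ∑ (x p q + x q p)²`, the sum of the squared game totals.
Moving one point of row `a` from column `b` to column `k` changes `Φ` by `4 (t_ak + 1 - t_ab)`,
so in a minimiser `t_ab ≤ t_ak + 1` whenever `x a b > 0`, with `Φ` unchanged in case of equality.

Suppose another realization `y` has all game totals `≤ c` while some minimiser has a game total
`> c`, and take such a minimiser `x` closest to `y` in `ℓ¹`. On a game of total `> c`, `x` gives
more points than `y` along some arc `a → b`; equal row sums give an arc `a → k` where `y` gives
more. Either moving a point from `(a, b)` to `(a, k)` keeps a game of total `> c` and brings `x`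
closer to `y`, or the game `{a, k}` again has total `> c` and `x` gives more along `k → a`.
Iterating, these arcs close up into cycles, and shifting one point of `x` forward along a cycle
keeps row sums and game totals and brings `x` closer to `y`: a contradiction either way.
Lower bounds on the smallest game total are handled symmetrically.
-/

open Finset

theorem Finset.exists_lt_of_sum_eq_of_lt {ι M : Type*} [AddCommMonoid M] [LinearOrder M]
    [IsOrderedCancelAddMonoid M] {s : Finset ι} {f g : ι → M} (h : ∑ i ∈ s, f i = ∑ i ∈ s, g i)
    {j : ι} (hj : j ∈ s) (hlt : g j < f j) : ∃ i ∈ s, f i < g i := by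
  by_contra! hle
  exact (sum_lt_sum hle ⟨j, hj, hlt⟩).ne' h

/-- A nonempty `f`-stable subset of minimal size is permuted by `f`. -/
theorem Finset.exists_subset_image_eq_injOn {α : Type*} [DecidableEq α] (f : α → α)
    {A : Finset α} (hA : A.Nonempty) (hf : A.image f ⊆ A) :
    ∃ B ⊆ A, B.Nonempty ∧ B.image f = B ∧ Set.InjOn f B := by
  obtain ⟨B, ⟨hBA, hB, hBf⟩, hmin⟩ := (measure (card (α := α))).wf.has_min
    {B | B ⊆ A ∧ B.Nonempty ∧ B.image f ⊆ B} ⟨A, subset_rfl, hA, hf⟩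
  have hcard : #B ≤ #(B.image f) :=
    not_lt.1 (hmin _ ⟨hBf.trans hBA, hB.image f, image_subset_image hBf⟩)
  have himage : B.image f = B := eq_of_subset_of_card_le hBf hcard
  exact ⟨B, hBA, hB, himage, card_image_iff.1 (by rw [himage])⟩

namespace PointMatrix

variable {α : Type*}

def pairTotal (x : α → α → ℕ) (p q : α) : ℕ := x p q + x q p

lemma pairTotal_comm (x : α → α → ℕ) (p q : α) : pairTotal x p q = pairTotal x q p :=
  Nat.add_comm _ _

section GameTotals

variable [LinearOrder α] {x : α → α → ℕ}

/-- The game totals over the pairs `i < j`: their maximum and minimum are `F` and `G`. -/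
def gameTotals (x : α → α → ℕ) : Set ℕ := {v | ∃ i j, i < j ∧ v = x i j + x j i}

lemma gameTotals_nonempty [Nontrivial α] (x : α → α → ℕ) : (gameTotals x).Nonempty :=
  let ⟨i, j, hij⟩ := exists_pair_lt α
  ⟨_, i, j, hij, rfl⟩

lemma gameTotals_finite [Finite α] (x : α → α → ℕ) : (gameTotals x).Finite :=
  (Set.finite_range fun z : α × α => x z.1 z.2 + x z.2 z.1).subset
    (by rintro _ ⟨i, j, -, rfl⟩; exact ⟨(i, j), rfl⟩)

lemma exists_isGreatest_gameTotals [Finite α] [Nontrivial α] (x : α → α → ℕ) :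
    ∃ F, IsGreatest (gameTotals x) F :=
  (gameTotals_finite x).bddAbove.exists_isGreatest_of_nonempty (gameTotals_nonempty x)

lemma exists_isLeast_gameTotals [Nontrivial α] (x : α → α → ℕ) :
    ∃ G, IsLeast (gameTotals x) G :=
  (OrderBot.bddBelow _).exists_isLeast_of_nonempty (gameTotals_nonempty x)

lemma pairTotal_le_of_isGreatest {F : ℕ} (hx : ∀ i, x i i = 0)
    (h : IsGreatest (gameTotals x) F) (p q : α) : pairTotal x p q ≤ F := by
  rcases lt_trichotomy p q with hpq | rfl | hpq
  · exact h.2 ⟨p, q, hpq, rfl⟩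
  · simp [pairTotal, hx]
  · rw [pairTotal_comm]
    exact h.2 ⟨q, p, hpq, rfl⟩

lemma le_pairTotal_of_isLeast {G : ℕ} (h : IsLeast (gameTotals x) G) {p q : α} (hpq : p ≠ q) :
    G ≤ pairTotal x p q := by
  rcases hpq.lt_or_gt with hpq | hpq
  · exact h.2 ⟨p, q, hpq, rfl⟩
  · rw [pairTotal_comm]
    exact h.2 ⟨q, p, hpq, rfl⟩

end GameTotals

section MovePoint

variable [DecidableEq α] {x : α → α → ℕ} {a b k : α}

def movePoint (x : α → α → ℕ) (a b k : α) : α → α → ℕ := fun p q =>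
  if p = a ∧ q = b then x p q - 1 else if p = a ∧ q = k then x p q + 1 else x p q

lemma pairTotal_movePoint (hab : a ≠ b) (hak : a ≠ k) (hbk : b ≠ k) (hpos : 0 < x a b)
    (p q : α) :
    pairTotal (movePoint x a b k) p q + (if (p, q) ∈ ({(a, b), (b, a)} : Finset _) then 1 else 0)
      = pairTotal x p q + (if (p, q) ∈ ({(a, k), (k, a)} : Finset _) then 1 else 0) := by
  grind [pairTotal, movePoint]

lemma pairTotal_movePoint_source (hab : a ≠ b) (hak : a ≠ k) (hbk : b ≠ k) (hpos : 0 < x a b) :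
    pairTotal (movePoint x a b k) a b + 1 = pairTotal x a b := by
  simpa [hab, hak, hbk] using pairTotal_movePoint hab hak hbk hpos a b

lemma pairTotal_movePoint_target (hab : a ≠ b) (hak : a ≠ k) (hbk : b ≠ k) (hpos : 0 < x a b) :
    pairTotal (movePoint x a b k) a k = pairTotal x a k + 1 := by
  simpa [hab, hak, hbk.symm] using pairTotal_movePoint hab hak hbk hpos a k

end MovePoint

section SkewAdd

variable {x y E : α → α → ℕ}

def skewAdd (x E : α → α → ℕ) : α → α → ℕ := fun p q => x p q + E p q - E q p

lemma pairTotal_skewAdd (hE : ∀ p q, E q p ≤ x p q) : pairTotal (skewAdd x E) = pairTotal x := by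
  ext p q
  have := hE p q
  have := hE q p
  unfold pairTotal skewAdd
  omega

end SkewAdd

variable [Fintype α]

def IsRealization (d : α → ℕ) (x : α → α → ℕ) : Prop :=
  (∀ i, x i i = 0) ∧ ∀ i, ∑ j, x i j = d i

def potential (x : α → α → ℕ) : ℕ := ∑ z : α × α, pairTotal x z.1 z.2 ^ 2

def l1Dist (x y : α → α → ℕ) : ℕ := ∑ z : α × α, Nat.dist (x z.1 z.2) (y z.1 z.2)

def IsMinPotential (d : α → ℕ) (x : α → α → ℕ) : Prop :=
  IsRealization d x ∧ ∀ y, IsRealization d y → potential x ≤ potential y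

variable {d : α → ℕ} {x y : α → α → ℕ}

lemma exists_isRealization [Nontrivial α] (d : α → ℕ) : ∃ x, IsRealization d x := by
  classical
  choose o ho using fun a : α => exists_ne a
  exact ⟨fun i j => if j = o i then d i else 0, fun i => by simp [(ho i).symm], fun i => by simp⟩

lemma exists_isMinPotential [Nontrivial α] (d : α → ℕ) : ∃ x, IsMinPotential d x := by
  obtain ⟨x₀, hx₀⟩ := exists_isRealization d
  obtain ⟨x, hx, hmin⟩ := (measure potential).wf.has_min {x | IsRealization d x} ⟨x₀, hx₀⟩
  exact ⟨x, hx, fun y hy => not_lt.1 (hmin y hy)⟩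

section MovePoint

variable [DecidableEq α] {a b k : α}

lemma IsRealization.movePoint (hx : IsRealization d x) (hab : a ≠ b) (hak : a ≠ k)
    (hbk : b ≠ k) (hpos : 0 < x a b) : IsRealization d (movePoint x a b k) := by
  refine ⟨fun p => by grind [PointMatrix.movePoint, hx.1 p], fun p => ?_⟩
  rw [← hx.2 p]
  by_cases hp : p = a
  · subst hp
    have hshift (q : α) : PointMatrix.movePoint x p b k p q + (if q = b then 1 else 0)
        = x p q + (if q = k then 1 else 0) := by
      unfold PointMatrix.movePoint
      split_ifs <;> grind
    have hsum := sum_congr rfl fun q (_ : q ∈ univ) => hshift q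
    simpa [sum_add_distrib] using hsum
  · exact sum_congr rfl fun q _ => by simp [PointMatrix.movePoint, hp]

lemma potential_movePoint (hab : a ≠ b) (hak : a ≠ k) (hbk : b ≠ k) (hpos : 0 < x a b) :
    potential (movePoint x a b k) + 4 * pairTotal x a b
      = potential x + 4 * (pairTotal x a k + 1) := by
  set Sab : Finset (α × α) := {(a, b), (b, a)}
  set Sak : Finset (α × α) := {(a, k), (k, a)}
  have key (z : α × α) :
      pairTotal (movePoint x a b k) z.1 z.2 ^ 2 + (if z ∈ Sab then 2 * pairTotal x z.1 z.2 else 0)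
        = pairTotal x z.1 z.2 ^ 2 + (if z ∈ Sak then 2 * pairTotal x z.1 z.2 + 1 else 0)
          + (if z ∈ Sab then 1 else 0) := by
    have h := pairTotal_movePoint hab hak hbk hpos z.1 z.2
    have hdisj : ¬ (z ∈ Sab ∧ z ∈ Sak) := by grind
    split_ifs at h ⊢ <;> grind
  have hsum := sum_congr rfl fun z (_ : z ∈ univ) => key z
  simp only [sum_add_distrib, sum_ite_mem, univ_inter, sum_const, smul_eq_mul, mul_one] at hsum
  have hab' : ((a, b) : α × α) ≠ (b, a) := fun h => hab (congrArg Prod.fst h)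
  have hak' : ((a, k) : α × α) ≠ (k, a) := fun h => hak (congrArg Prod.fst h)
  rw [sum_pair hab', sum_pair hak', card_pair hab', card_pair hak'] at hsum
  dsimp only at hsum
  rw [pairTotal_comm x b a, pairTotal_comm x k a] at hsum
  unfold potential
  omega

lemma l1Dist_movePoint_lt (hab : y a b < x a b) (hak : x a k < y a k) :
    l1Dist (movePoint x a b k) y < l1Dist x y := by
  apply sum_lt_sum
  · rintro ⟨p, q⟩ -
    unfold PointMatrix.movePoint Nat.dist
    split_ifs <;> grind
  · refine ⟨(a, b), mem_univ _, ?_⟩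
    simp only [PointMatrix.movePoint, and_self, if_true, Nat.dist]
    omega

lemma IsMinPotential.pairTotal_le_add_one (hx : IsMinPotential d x) (hab : a ≠ b) (hak : a ≠ k)
    (hbk : b ≠ k) (hpos : 0 < x a b) : pairTotal x a b ≤ pairTotal x a k + 1 := by
  have := hx.2 _ (hx.1.movePoint hab hak hbk hpos)
  have := potential_movePoint hab hak hbk hpos
  omega

lemma IsMinPotential.movePoint (hx : IsMinPotential d x) (hab : a ≠ b) (hak : a ≠ k)
    (hbk : b ≠ k) (hpos : 0 < x a b) (heq : pairTotal x a b = pairTotal x a k + 1) :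
    IsMinPotential d (movePoint x a b k) := by
  refine ⟨hx.1.movePoint hab hak hbk hpos, fun z hz => ?_⟩
  have := hx.2 z hz
  have := potential_movePoint hab hak hbk hpos
  omega

end MovePoint

section SkewAdd

variable {E : α → α → ℕ}

lemma IsRealization.skewAdd (hx : IsRealization d x) (hbal : ∀ p, ∑ q, E p q = ∑ q, E q p)
    (hE : ∀ p q, E q p ≤ x p q) : IsRealization d (skewAdd x E) := by
  refine ⟨fun p => by simp [PointMatrix.skewAdd, hx.1 p], fun p => ?_⟩
  unfold PointMatrix.skewAdd
  rw [sum_tsub_distrib _ fun q _ => le_add_right (hE p q), sum_add_distrib, hbal p, hx.2 p,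
    Nat.add_sub_cancel]

lemma IsMinPotential.skewAdd (hx : IsMinPotential d x) (hbal : ∀ p, ∑ q, E p q = ∑ q, E q p)
    (hE : ∀ p q, E q p ≤ x p q) : IsMinPotential d (skewAdd x E) := by
  refine ⟨hx.1.skewAdd hbal hE, fun z hz => ?_⟩
  unfold potential
  rw [pairTotal_skewAdd hE]
  exact hx.2 z hz

lemma l1Dist_skewAdd_lt
    (hE : ∀ p q, E p q ≠ 0 → x p q + E p q ≤ y p q ∧ y q p + E p q ≤ x q p)
    (hne : ∃ p q, E p q ≠ 0) : l1Dist (skewAdd x E) y < l1Dist x y := by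
  apply sum_lt_sum
  · rintro ⟨p, q⟩ -
    have := hE p q
    have := hE q p
    dsimp only
    unfold PointMatrix.skewAdd Nat.dist
    omega
  · obtain ⟨p, q, hpq⟩ := hne
    refine ⟨(p, q), mem_univ _, ?_⟩
    have := hE p q
    have := hE q p
    dsimp only
    unfold PointMatrix.skewAdd Nat.dist
    omega

lemma IsMinPotential.exists_closer_of_circulation (hx : IsMinPotential d x)
    (hbal : ∀ p, ∑ q, E p q = ∑ q, E q p) (hne : ∃ p q, E p q ≠ 0)
    (hE : ∀ p q, E p q ≠ 0 → E p q = 1 ∧ x p q < y p q ∧ y q p < x q p) :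
    ∃ x', IsMinPotential d x' ∧ pairTotal x' = pairTotal x ∧ l1Dist x' y < l1Dist x y := by
  have hE' (p q : α) (h : E p q ≠ 0) : x p q + E p q ≤ y p q ∧ y q p + E p q ≤ x q p := by
    obtain ⟨h1, h2, h3⟩ := hE p q h
    omega
  have hle (p q : α) : E q p ≤ x p q := by
    by_cases h : E q p = 0
    · omega
    · have := hE' q p h
      omega
  exact ⟨PointMatrix.skewAdd x E, hx.skewAdd hbal hle, pairTotal_skewAdd hle,
    l1Dist_skewAdd_lt hE' hne⟩

end SkewAdd

section Circulation

theorem exists_circulation_of_mapsTo [DecidableEq α] {P : α → α → Prop} (f : α → α)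
    {A : Finset α} (hA : A.Nonempty) (hf : ∀ a ∈ A, f a ∈ A ∧ P a (f a)) :
    ∃ E : α → α → ℕ, (∀ p, ∑ q, E p q = ∑ q, E q p) ∧ (∃ p q, E p q ≠ 0) ∧
      ∀ p q, E p q ≠ 0 → E p q = 1 ∧ P p q := by
  obtain ⟨B, hBA, hB, himage, hinj⟩ :=
    exists_subset_image_eq_injOn f hA (image_subset_iff.2 fun a ha => (hf a ha).1)
  -- `E` is the graph of `f` on `B`; since `f` permutes `B`, every vertex of `B` has in- and
  -- out-degree one.
  refine ⟨fun p q => if p ∈ B ∧ f p = q then 1 else 0, fun p => ?_, ?_, fun p q h => ?_⟩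
  · have hin : ∑ q, (if q ∈ B ∧ f q = p then 1 else 0)
        = ∑ r ∈ B.image f, if r = p then 1 else 0 := by
      rw [sum_image hinj, ← sum_filter, ← sum_filter]
      congr 1
      ext q; simp
    rw [hin, himage, sum_ite_eq']
    simp [ite_and]
  · obtain ⟨p, hp⟩ := hB
    exact ⟨p, f p, by simp [hp]⟩
  · dsimp only at h ⊢
    split_ifs at h ⊢ with hpq
    · exact ⟨rfl, hpq.2 ▸ (hf p (hBA hpq.1)).2⟩
    · exact absurd rfl h

theorem exists_circulation {H P : α → α → Prop} (h₀ : ∃ a b, H a b)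
    (hstep : ∀ a b, H a b → ∃ k, P a k ∧ H k a) :
    ∃ E : α → α → ℕ, (∀ p, ∑ q, E p q = ∑ q, E q p) ∧ (∃ p q, E p q ≠ 0) ∧
      ∀ p q, E p q ≠ 0 → E p q = 1 ∧ P p q := by
  classical
  have hsucc : ∀ a ∈ univ.filter (fun a => ∃ b, H a b),
      ∃ k, k ∈ univ.filter (fun a => ∃ b, H a b) ∧ P a k := by
    intro a ha
    obtain ⟨b, hab⟩ := (mem_filter.1 ha).2
    obtain ⟨k, hak, hka⟩ := hstep a b hab
    exact ⟨k, mem_filter.2 ⟨mem_univ k, a, hka⟩, hak⟩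
  choose! f hf using hsucc
  obtain ⟨a, b, hab⟩ := h₀
  exact exists_circulation_of_mapsTo f ⟨a, mem_filter.2 ⟨mem_univ a, b, hab⟩⟩ hf

end Circulation

section Descent

variable [DecidableEq α] {c : ℕ}

lemma IsMinPotential.exists_closer_or_exists_succ_of_lt_pairTotal (hx : IsMinPotential d x)
    (hy : IsRealization d y) (hyc : ∀ p q, pairTotal y p q ≤ c) {a b : α}
    (hab : y a b < x a b) (hc : c < pairTotal x a b) :
    (∃ x', IsMinPotential d x' ∧ (∃ p q, c < pairTotal x' p q) ∧ l1Dist x' y < l1Dist x y) ∨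
      ∃ k, (x a k < y a k ∧ y k a < x k a) ∧ (y k a < x k a ∧ c < pairTotal x k a) := by
  obtain ⟨k, -, hk⟩ :=
    exists_lt_of_sum_eq_of_lt ((hx.1.2 a).trans (hy.2 a).symm) (mem_univ b) hab
  have hab' : a ≠ b := by rintro rfl; have := hx.1.1 a; omega
  have hak : a ≠ k := by rintro rfl; have := hx.1.1 a; have := hy.1 a; omega
  have hbk : b ≠ k := by rintro rfl; omega
  have hle := hx.pairTotal_le_add_one hab' hak hbk (by omega)
  by_cases hck : c < pairTotal x a k
  · right
    have := hyc a k
    refine ⟨k, ⟨hk, ?_⟩, ?_, ?_⟩ <;> unfold pairTotal at * <;> omega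
  · left
    refine ⟨PointMatrix.movePoint x a b k, hx.movePoint hab' hak hbk (by omega) (by omega),
      ⟨a, k, ?_⟩, l1Dist_movePoint_lt hab hk⟩
    rw [pairTotal_movePoint_target hab' hak hbk (by omega)]
    omega

lemma IsMinPotential.exists_closer_or_exists_succ_of_pairTotal_lt (hx : IsMinPotential d x)
    (hy : IsRealization d y) (hyc : ∀ p q, p ≠ q → c ≤ pairTotal y p q) {a b : α}
    (hab : x a b < y a b) (hc : pairTotal x a b < c) :
    (∃ x', IsMinPotential d x' ∧ (∃ p q, p ≠ q ∧ pairTotal x' p q < c) ∧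
        l1Dist x' y < l1Dist x y) ∨
      ∃ k, (y a k < x a k ∧ x k a < y k a) ∧ (x k a < y k a ∧ pairTotal x k a < c) := by
  obtain ⟨k, -, hk⟩ :=
    exists_lt_of_sum_eq_of_lt ((hy.2 a).trans (hx.1.2 a).symm) (mem_univ b) hab
  have hab' : a ≠ b := by rintro rfl; have := hy.1 a; omega
  have hak : a ≠ k := by rintro rfl; have := hx.1.1 a; omega
  have hbk : b ≠ k := by rintro rfl; omega
  have hle := hx.pairTotal_le_add_one hak hab' hbk.symm (by omega)
  by_cases hck : pairTotal x a k < c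
  · right
    have := hyc a k hak
    refine ⟨k, ⟨hk, ?_⟩, ?_, ?_⟩ <;> unfold pairTotal at * <;> omega
  · left
    refine ⟨PointMatrix.movePoint x a k b, hx.movePoint hak hab' hbk.symm (by omega) (by omega),
      ⟨a, k, hak, ?_⟩, l1Dist_movePoint_lt hk hab⟩
    have := pairTotal_movePoint_source (x := x) hak hab' hbk.symm (by omega)
    omega

lemma IsMinPotential.exists_closer_of_lt_pairTotal (hx : IsMinPotential d x)
    (hy : IsRealization d y) (hyc : ∀ p q, pairTotal y p q ≤ c)
    (hxc : ∃ p q, c < pairTotal x p q) :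
    ∃ x', IsMinPotential d x' ∧ (∃ p q, c < pairTotal x' p q) ∧ l1Dist x' y < l1Dist x y := by
  by_contra hno
  have h₀ : ∃ a b, y a b < x a b ∧ c < pairTotal x a b := by
    obtain ⟨p, q, hpq⟩ := hxc
    have := hyc p q
    by_cases h : y p q < x p q
    · exact ⟨p, q, h, hpq⟩
    · exact ⟨q, p, by unfold pairTotal at *; omega, pairTotal_comm x p q ▸ hpq⟩
  obtain ⟨E, hbal, hne, hE⟩ := exists_circulation h₀ fun a b hab =>
    (hx.exists_closer_or_exists_succ_of_lt_pairTotal hy hyc hab.1 hab.2).resolve_left hno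
  obtain ⟨x', hx', htot, hdist⟩ := hx.exists_closer_of_circulation hbal hne hE
  exact hno ⟨x', hx', by rwa [htot], hdist⟩

lemma IsMinPotential.exists_closer_of_pairTotal_lt (hx : IsMinPotential d x)
    (hy : IsRealization d y) (hyc : ∀ p q, p ≠ q → c ≤ pairTotal y p q)
    (hxc : ∃ p q, p ≠ q ∧ pairTotal x p q < c) :
    ∃ x', IsMinPotential d x' ∧ (∃ p q, p ≠ q ∧ pairTotal x' p q < c) ∧
      l1Dist x' y < l1Dist x y := by
  by_contra hno
  have h₀ : ∃ a b, x a b < y a b ∧ pairTotal x a b < c := by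
    obtain ⟨p, q, hpq, hc⟩ := hxc
    have := hyc p q hpq
    by_cases h : x p q < y p q
    · exact ⟨p, q, h, hc⟩
    · exact ⟨q, p, by unfold pairTotal at *; omega, pairTotal_comm x p q ▸ hc⟩
  obtain ⟨E, hbal, ⟨p, q, hpq⟩, hE⟩ := exists_circulation h₀ fun a b hab =>
    (hx.exists_closer_or_exists_succ_of_pairTotal_lt hy hyc hab.1 hab.2).resolve_left hno
  obtain ⟨x', hx', htot, hdist⟩ := hx.exists_closer_of_circulation (E := fun p q => E q p)
    (fun p => (hbal p).symm) ⟨q, p, hpq⟩ fun p q h =>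
      let ⟨h1, h2, h3⟩ := hE q p h
      ⟨h1, h3, h2⟩
  exact hno ⟨x', hx', by rwa [htot], hdist⟩

theorem IsMinPotential.pairTotal_le (hx : IsMinPotential d x) (hy : IsRealization d y)
    (hyc : ∀ p q, pairTotal y p q ≤ c) (p q : α) : pairTotal x p q ≤ c := by
  by_contra! h
  obtain ⟨x₀, ⟨hx₀, hc₀⟩, hmin⟩ := (measure (l1Dist · y)).wf.has_min
    {x | IsMinPotential d x ∧ ∃ p q, c < pairTotal x p q} ⟨x, hx, p, q, h⟩
  obtain ⟨x', hx', hc', hlt⟩ := hx₀.exists_closer_of_lt_pairTotal hy hyc hc₀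
  exact hmin x' ⟨hx', hc'⟩ hlt

theorem IsMinPotential.le_pairTotal (hx : IsMinPotential d x) (hy : IsRealization d y)
    (hyc : ∀ p q, p ≠ q → c ≤ pairTotal y p q) {p q : α} (hpq : p ≠ q) :
    c ≤ pairTotal x p q := by
  by_contra! h
  obtain ⟨x₀, ⟨hx₀, hc₀⟩, hmin⟩ := (measure (l1Dist · y)).wf.has_min
    {x | IsMinPotential d x ∧ ∃ p q, p ≠ q ∧ pairTotal x p q < c} ⟨x, hx, p, q, hpq, h⟩
  obtain ⟨x', hx', hc', hlt⟩ := hx₀.exists_closer_of_pairTotal_lt hy hyc hc₀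
  exact hmin x' ⟨hx', hc'⟩ hlt

end Descent

end PointMatrix

open PointMatrix

theorem exists_minimax_realization_general (n : ℕ) (hn : 2 ≤ n) (D : Fin n → ℕ) :
    ∃ f g : ℕ, ∃ M : Fin n → Fin n → ℕ,
      (∀ i, M i i = 0) ∧
      (∀ i, ∑ j, M i j = D i) ∧
      IsGreatest {v : ℕ | ∃ i j : Fin n, i < j ∧ v = M i j + M j i} f ∧
      IsLeast {v : ℕ | ∃ i j : Fin n, i < j ∧ v = M i j + M j i} g ∧
      (∀ M' : Fin n → Fin n → ℕ,
        (∀ i, M' i i = 0) → (∀ i, ∑ j, M' i j = D i) →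
          (∃ i j : Fin n, i < j ∧ f ≤ M' i j + M' j i) ∧
          (∃ i j : Fin n, i < j ∧ M' i j + M' j i ≤ g)) := by
  have : Nontrivial (Fin n) := Fin.nontrivial_iff_two_le.2 hn
  obtain ⟨M, hM⟩ := exists_isMinPotential D
  obtain ⟨f, hf⟩ := exists_isGreatest_gameTotals M
  obtain ⟨g, hg⟩ := exists_isLeast_gameTotals M
  refine ⟨f, g, M, hM.1.1, hM.1.2, hf, hg, fun M' hM'₀ hM'D => ⟨?_, ?_⟩⟩
  · obtain ⟨f', hf'⟩ := exists_isGreatest_gameTotals M'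
    obtain ⟨i, j, hij, rfl⟩ := hf'.1
    obtain ⟨p, q, -, rfl⟩ := hf.1
    exact ⟨i, j, hij, hM.pairTotal_le ⟨hM'₀, hM'D⟩ (pairTotal_le_of_isGreatest hM'₀ hf') p q⟩
  · obtain ⟨g', hg'⟩ := exists_isLeast_gameTotals M'
    obtain ⟨i, j, hij, rfl⟩ := hg'.1
    obtain ⟨p, q, hpq, rfl⟩ := hg.1
    exact ⟨i, j, hij, hM.le_pairTotal ⟨hM'₀, hM'D⟩
      (fun _ _ => le_pairTotal_of_isLeast hg') hpq.ne⟩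

/-- linking property: For `n ≥ 2` and a nondecreasing sequence `D` of
nonnegative integers there are `f`, `g` and a single realization `M` of `D` such that
`f = max_{i<j} (M i j + M j i)`, `g = min_{i<j} (M i j + M j i)`, while every realization
`M'` of `D` has `max_{i<j} (M' i j + M' j i) ≥ f` and `min_{i<j} (M' i j + M' j i) ≤ g`. -/
theorem exists_minimax_realization (n : ℕ) (hn : 2 ≤ n) (D : Fin n → ℕ) (hD : Monotone D) :
    ∃ f g : ℕ, ∃ M : Fin n → Fin n → ℕ,
      (∀ i, M i i = 0) ∧
      (∀ i, ∑ j, M i j = D i) ∧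
      IsGreatest {v : ℕ | ∃ i j : Fin n, i < j ∧ v = M i j + M j i} f ∧
      IsLeast {v : ℕ | ∃ i j : Fin n, i < j ∧ v = M i j + M j i} g ∧
      (∀ M' : Fin n → Fin n → ℕ,
        (∀ i, M' i i = 0) → (∀ i, ∑ j, M' i j = D i) →
          (∃ i j : Fin n, i < j ∧ f ≤ M' i j + M' j i) ∧
          (∃ i j : Fin n, i < j ∧ M' i j + M' j i ≤ g)) :=
  exists_minimax_realization_general n hn D
end
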